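/- For fixed δ ∈ (0,1) and μ > 0, the function δ(ε, μ) = Φ(−ε/μ + μ/2) − e^ε Φ(−ε/μ − μ/2) is strictly decreasing in ε; consequently the ε solving δ(ε, μ) = δ (when it exists) is uniquely determined by μ. -/

import Mathlib

/-!
Differentiating in `ε`, the two density terms cancel: the Gaussian likelihood ratio
`φ(x - μ) = e^{μx - μ²/2} φ(x)` at `x = -ε/μ + μ/2` gives `e^ε φ(-ε/μ - μ/2) = φ(-ε/μ + μ/2)`.
Hence `∂δ/∂ε = -e^ε Φ(-ε/μ - μ/2) < 0` on all of `ℝ`.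
-/

open ProbabilityTheory

/-- Standard normal CDF `Φ`. -/
noncomputable def stdGaussCDF (x : ℝ) : ℝ := (gaussianReal 0 1 (Set.Iic x)).toReal

/-- GDP curve `δ(ε, μ) = Φ(−ε/μ + μ/2) − e^ε Φ(−ε/μ − μ/2)`. -/
noncomputable def gdpDelta (ε μ : ℝ) : ℝ :=
  stdGaussCDF (-ε / μ + μ / 2) - Real.exp ε * stdGaussCDF (-ε / μ - μ / 2)

open MeasureTheory Set

theorem hasDerivAt_integral_Iic {E : Type*} [NormedAddCommGroup E] [NormedSpace ℝ E]
    [CompleteSpace E] {f : ℝ → E} (hf : Integrable f) {x : ℝ} (hx : ContinuousAt f x) :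
    HasDerivAt (fun y => ∫ t in Iic y, f t) (f x) x := by
  have split : (fun y => ∫ t in Iic y, f t) =
      fun y => (∫ t in Iic 0, f t) + ∫ t in (0 : ℝ)..y, f t := funext fun y => by
    rw [← intervalIntegral.integral_Iic_sub_Iic hf.integrableOn hf.integrableOn]
    abel
  rw [split]
  exact (intervalIntegral.integral_hasDerivAt_right hf.intervalIntegrable
    hf.aestronglyMeasurable.stronglyMeasurableAtFilter hx).const_add _

theorem stdGaussCDF_eq_integral (x : ℝ) :
    stdGaussCDF x = ∫ t in Iic x, gaussianPDFReal 0 1 t := by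
  rw [stdGaussCDF, gaussianReal_apply_eq_integral 0 one_ne_zero,
    ENNReal.toReal_ofReal (integral_nonneg fun t => gaussianPDFReal_nonneg 0 1 t)]

theorem stdGaussCDF_pos (x : ℝ) : 0 < stdGaussCDF x := by
  refine ENNReal.toReal_pos (fun h => ?_) (measure_ne_top _ _)
  simpa [Real.volume_Iic] using gaussianReal_absolutelyContinuous' 0 one_ne_zero h

theorem hasDerivAt_stdGaussCDF (x : ℝ) :
    HasDerivAt stdGaussCDF (gaussianPDFReal 0 1 x) x := by
  have hcont : Continuous (gaussianPDFReal 0 1) := by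
    unfold gaussianPDFReal
    fun_prop
  simpa only [← stdGaussCDF_eq_integral] using
    hasDerivAt_integral_Iic (integrable_gaussianPDFReal 0 1) hcont.continuousAt

theorem gaussianPDFReal_zero_one_sub (x μ : ℝ) :
    gaussianPDFReal 0 1 (x - μ) = Real.exp (μ * x - μ ^ 2 / 2) * gaussianPDFReal 0 1 x := by
  simp only [gaussianPDFReal, sub_zero, NNReal.coe_one, mul_one]
  rw [mul_left_comm, ← Real.exp_add]
  ring_nf

theorem exp_mul_gaussianPDFReal_gdp {μ : ℝ} (hμ : μ ≠ 0) (ε : ℝ) :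
    Real.exp ε * gaussianPDFReal 0 1 (-ε / μ - μ / 2) = gaussianPDFReal 0 1 (-ε / μ + μ / 2) := by
  have ratio := gaussianPDFReal_zero_one_sub (-ε / μ + μ / 2) μ
  have exponent : μ * (-ε / μ + μ / 2) - μ ^ 2 / 2 = -ε := by field_simp; ring
  rw [exponent, show -ε / μ + μ / 2 - μ = -ε / μ - μ / 2 by ring] at ratio
  rw [ratio, ← mul_assoc, ← Real.exp_add, add_neg_cancel, Real.exp_zero, one_mul]

theorem hasDerivAt_gdpDelta {μ : ℝ} (hμ : μ ≠ 0) (ε : ℝ) :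
    HasDerivAt (fun ε => gdpDelta ε μ) (-(Real.exp ε * stdGaussCDF (-ε / μ - μ / 2))) ε := by
  have hlin : ∀ c, HasDerivAt (fun ε : ℝ => -ε / μ + c) (-(1 / μ)) ε := fun c => by
    simpa [neg_div] using ((hasDerivAt_id ε).neg.div_const μ).add_const c
  have hplus := (hasDerivAt_stdGaussCDF _).comp ε (hlin (μ / 2))
  have hminus := (Real.hasDerivAt_exp ε).mul ((hasDerivAt_stdGaussCDF _).comp ε (hlin (-(μ / 2))))
  simp only [← sub_eq_add_neg, Function.comp_apply] at hminus
  refine (hplus.sub hminus).congr_deriv ?_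
  linear_combination (1 / μ) * exp_mul_gaussianPDFReal_gdp hμ ε

theorem strictAnti_gdpDelta {μ : ℝ} (hμ : μ ≠ 0) : StrictAnti (fun ε => gdpDelta ε μ) :=
  strictAnti_of_hasDerivAt_neg (hasDerivAt_gdpDelta hμ) fun ε =>
    neg_neg_of_pos (mul_pos (Real.exp_pos ε) (stdGaussCDF_pos _))

/-- For fixed `μ > 0`, `ε ↦ δ(ε, μ)` is strictly decreasing on `ε ≥ 0`; consequently
for fixed `δ ∈ (0,1)` the `ε ≥ 0` solving `δ(ε, μ) = δ` (when it exists) is unique. -/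
theorem gdpDelta_strictAnti (μ : ℝ) (hμ : 0 < μ) :
    StrictAntiOn (fun ε => gdpDelta ε μ) (Set.Ici 0)
    ∧ ∀ δ ∈ Set.Ioo (0 : ℝ) 1, ∀ ε₁ ∈ Set.Ici (0 : ℝ), ∀ ε₂ ∈ Set.Ici (0 : ℝ),
        gdpDelta ε₁ μ = δ → gdpDelta ε₂ μ = δ → ε₁ = ε₂ := by
  have hanti := strictAnti_gdpDelta hμ.ne'
  exact ⟨hanti.strictAntiOn _,
    fun δ _ ε₁ _ ε₂ _ h₁ h₂ => hanti.injective (h₁.trans h₂.symm)⟩
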